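/- Let m = qn + r with q, r nonnegative integers, n a positive integer, 0 < r ≤ n/2, and assume qr ≥ n − 2r. Then L(m,n) = m + r = qn + 2r; that is, every A ∈ D(m,n) satisfies tdet A ≥ qn + 2r, and there exists A ∈ D(m,n) with tdet A = qn + 2r. -/

import Mathlib

/-!
Lower bound: if `σ` realises `tdet A`, exchanging the images of two rows `i`, `j` cannot increase
the transversal sum, so `A i (σ j) + A j (σ i) ≤ A i (σ i) + A j (σ j)`. Summing over `j` and
using the line sums gives `2m ≤ n A i (σ i) + tdet A`. If `tdet A < qn + 2r`, every entry
`A i (σ i)` therefore exceeds `q`, and then `tdet A ≥ (q + 1) n ≥ qn + 2r`.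

Extremal matrix: take the entries `q + [i < r] + [j < r]`, except on the top-left `r × r` corner,
where they are `q - d ((i + j) mod r)` for a balanced split `d` of `n - 2r` into `r` parts
(possible since `n - 2r ≤ qr`). This circulant corner makes every line sum `qn + r`, the cover
`(q + [i < r]) + [j < r]` bounds every transversal by `qn + 2r`, and the reversal of `Fin n`
attains it.
-/

/-- D(m,n): n×n matrices with nonnegative integer entries, all row and column sums equal m. -/
def IsDSM (m n : ℕ) (A : Fin n → Fin n → ℕ) : Prop :=
  (∀ i, ∑ j, A i j = m) ∧ (∀ j, ∑ i, A i j = m)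

/-- tdet A: maximum of a transversal sum over all permutations. -/
def tdet {n : ℕ} (A : Fin n → Fin n → ℕ) : ℕ :=
  Finset.univ.sup fun σ : Equiv.Perm (Fin n) => ∑ i, A i (σ i)

open Finset

theorem Finset.sum_range_add_mod {M : Type*} [AddCommMonoid M] (f : ℕ → M) (s r : ℕ) :
    ∑ j ∈ range r, f ((s + j) % r) = ∑ j ∈ range r, f j := by
  rcases Nat.eq_zero_or_pos r with rfl | hr
  · simp
  have : NeZero r := ⟨hr.ne'⟩
  simp only [← Fin.sum_univ_eq_sum_range]
  rw [← Equiv.sum_comp (Equiv.addLeft (Fin.ofNat r s)) (fun j : Fin r => f j)]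
  simp [Fin.val_add]

theorem Fin.sum_boole_val_lt {n r : ℕ} (hr : r ≤ n) :
    ∑ i : Fin n, (if (i : ℕ) < r then 1 else 0) = r := by
  simp [sum_boole, Fin.card_filter_val_lt, hr]

theorem Fin.sum_ite_val_lt {M : Type*} [AddCommMonoid M] {n r : ℕ} (hr : r ≤ n) (f : ℕ → M) :
    ∑ i : Fin n, (if (i : ℕ) < r then f i else 0) = ∑ i ∈ range r, f i := by
  rw [Fin.sum_univ_eq_sum_range (fun i => if i < r then f i else 0), ← sum_filter]
  congr 1
  ext i
  simp only [mem_filter, mem_range]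
  omega

theorem Equiv.Perm.add_le_add_of_forall_sum_le {ι α : Type*} [Fintype ι] [DecidableEq ι]
    [AddCommMonoid α] [PartialOrder α] [IsOrderedCancelAddMonoid α]
    (A : ι → ι → α) {σ : Equiv.Perm ι} (hσ : ∀ τ : Equiv.Perm ι, ∑ i, A i (τ i) ≤ ∑ i, A i (σ i))
    (i j : ι) : A i (σ j) + A j (σ i) ≤ A i (σ i) + A j (σ j) := by
  rcases eq_or_ne i j with rfl | hij
  · rfl
  have hsplit : ∀ τ : Equiv.Perm ι, ∑ k, A k (τ k) =
      ∑ k ∈ univ \ {i, j}, A k (τ k) + (A i (τ i) + A j (τ j)) := fun τ => by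
    rw [← sum_pair (f := fun k => A k (τ k)) hij, sum_sdiff (subset_univ _)]
  have hrest : ∑ k ∈ univ \ {i, j}, A k ((Equiv.swap i j).trans σ k) =
      ∑ k ∈ univ \ {i, j}, A k (σ k) := sum_congr rfl fun k hk => by
    simp only [mem_sdiff, mem_insert, mem_singleton, not_or] at hk
    simp [Equiv.swap_apply_of_ne_of_ne hk.2.1 hk.2.2]
  have := hσ ((Equiv.swap i j).trans σ)
  rw [hsplit, hsplit σ, hrest] at this
  simpa using le_of_add_le_add_left this

theorem sum_le_tdet {n : ℕ} (A : Fin n → Fin n → ℕ) (σ : Equiv.Perm (Fin n)) :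
    ∑ i, A i (σ i) ≤ tdet A :=
  le_sup (f := fun σ : Equiv.Perm (Fin n) => ∑ i, A i (σ i)) (mem_univ σ)

theorem tdet_le_of_le_add {n : ℕ} {A : Fin n → Fin n → ℕ} (a b : Fin n → ℕ)
    (h : ∀ i j, A i j ≤ a i + b j) : tdet A ≤ ∑ i, a i + ∑ j, b j :=
  Finset.sup_le fun σ _ => by
    calc ∑ i, A i (σ i) ≤ ∑ i, (a i + b (σ i)) := sum_le_sum fun i _ => h i (σ i)
      _ = ∑ i, a i + ∑ j, b j := by rw [sum_add_distrib, Equiv.sum_comp σ b]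

theorem exists_sum_eq_tdet {n : ℕ} (A : Fin n → Fin n → ℕ) :
    ∃ σ : Equiv.Perm (Fin n), ∑ i, A i (σ i) = tdet A := by
  obtain ⟨σ, -, hσ⟩ := exists_mem_eq_sup univ univ_nonempty fun σ : Equiv.Perm (Fin n) =>
    ∑ i, A i (σ i)
  exact ⟨σ, hσ.symm⟩

theorem IsDSM.two_mul_le {m n : ℕ} {A : Fin n → Fin n → ℕ} (hA : IsDSM m n A)
    {σ : Equiv.Perm (Fin n)} (hσ : ∑ i, A i (σ i) = tdet A) (i : Fin n) :
    2 * m ≤ n * A i (σ i) + tdet A := by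
  have hswap := Equiv.Perm.add_le_add_of_forall_sum_le A (fun τ => hσ ▸ sum_le_tdet A τ) i
  calc 2 * m = ∑ j, (A i (σ j) + A j (σ i)) := by
        rw [sum_add_distrib, Equiv.sum_comp σ (A i), hA.1 i, hA.2 (σ i), two_mul]
    _ ≤ ∑ j, (A i (σ i) + A j (σ j)) := sum_le_sum fun j _ => hswap j
    _ = n * A i (σ i) + tdet A := by simp [sum_add_distrib, hσ]

theorem IsDSM.le_tdet {q n r : ℕ} {A : Fin n → Fin n → ℕ} (hA : IsDSM (q * n + r) n A)
    (hr : 2 * r ≤ n) : q * n + 2 * r ≤ tdet A := by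
  obtain ⟨σ, hσ⟩ := exists_sum_eq_tdet A
  by_contra! hlt
  have hdiag : ∀ i, q + 1 ≤ A i (σ i) := fun i => by
    by_contra! hle
    have := hA.two_mul_le hσ i
    have : n * A i (σ i) ≤ n * q := Nat.mul_le_mul_left n (Nat.le_of_lt_succ hle)
    linarith [mul_comm n q]
  have : n * (q + 1) ≤ tdet A := by
    simpa [hσ] using sum_le_sum fun i (_ : i ∈ univ) => hdiag i
  linarith [mul_comm n q]

def balancedSplit (u r t : ℕ) : ℕ := u / r + if t < u % r then 1 else 0

theorem sum_balancedSplit {u r : ℕ} (hr : 0 < r) : ∑ t ∈ range r, balancedSplit u r t = u := by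
  simp only [balancedSplit, sum_add_distrib, sum_const, card_range, smul_eq_mul,
    ← Fin.sum_univ_eq_sum_range fun t => if t < u % r then 1 else 0,
    Fin.sum_boole_val_lt (Nat.mod_lt u hr).le]
  exact Nat.div_add_mod u r

theorem balancedSplit_le {u r q : ℕ} (hu : u ≤ q * r) (t : ℕ) : balancedSplit u r t ≤ q := by
  have hdm := Nat.div_add_mod u r
  unfold balancedSplit
  split_ifs with ht
  · have : u / r < q := Nat.lt_of_mul_lt_mul_left (a := r) (by rw [mul_comm r q]; omega)
    omega
  · simpa using Nat.div_le_of_le_mul (by rwa [mul_comm r q])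

section Extremal

variable (q r n : ℕ)

def cornerExcess (i j : ℕ) : ℕ :=
  if i < r ∧ j < r then 2 + balancedSplit (n - 2 * r) r ((i + j) % r) else 0

def extremalMatrix (i j : Fin n) : ℕ :=
  q + (if (i : ℕ) < r then 1 else 0) + (if (j : ℕ) < r then 1 else 0) - cornerExcess r n i j

variable {q r n}

theorem cornerExcess_le (hqr : n ≤ q * r + 2 * r) (i j : ℕ) :
    cornerExcess r n i j ≤ q + (if i < r then 1 else 0) + (if j < r then 1 else 0) := by
  have := balancedSplit_le (u := n - 2 * r) (r := r) (q := q) (by omega) ((i + j) % r)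
  unfold cornerExcess
  split_ifs <;> omega

theorem sum_cornerExcess (hr : 0 < r) (hrn : 2 * r ≤ n) (i : ℕ) :
    ∑ j : Fin n, cornerExcess r n i j = if i < r then n else 0 := by
  unfold cornerExcess
  split_ifs with hi
  · simp only [hi, true_and]
    rw [Fin.sum_ite_val_lt (by omega) fun j => 2 + balancedSplit (n - 2 * r) r ((i + j) % r),
      sum_add_distrib, sum_range_add_mod (balancedSplit _ r) i r, sum_balancedSplit hr]
    simp only [sum_const, card_range, smul_eq_mul]
    omega
  · simp [hi]

theorem extremalMatrix_row_sum (hr : 0 < r) (hrn : 2 * r ≤ n) (hqr : n ≤ q * r + 2 * r)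
    (i : Fin n) : ∑ j, extremalMatrix q r n i j = q * n + r := by
  unfold extremalMatrix
  rw [sum_tsub_distrib _ fun (j : Fin n) _ => cornerExcess_le hqr i j, sum_cornerExcess hr hrn,
    sum_add_distrib, sum_add_distrib, Fin.sum_boole_val_lt (by omega : r ≤ n)]
  simp only [sum_const, card_univ, Fintype.card_fin, smul_eq_mul, mul_comm n]
  split_ifs <;> omega

theorem extremalMatrix_symm (i j : Fin n) :
    extremalMatrix q r n i j = extremalMatrix q r n j i := by
  simp only [extremalMatrix, cornerExcess, add_comm (j : ℕ), and_comm]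
  ring_nf

theorem isDSM_extremalMatrix (hr : 0 < r) (hrn : 2 * r ≤ n) (hqr : n ≤ q * r + 2 * r) :
    IsDSM (q * n + r) n (extremalMatrix q r n) :=
  ⟨extremalMatrix_row_sum hr hrn hqr, fun j => by
    simpa only [extremalMatrix_symm j] using extremalMatrix_row_sum hr hrn hqr j⟩

theorem tdet_extremalMatrix (hrn : 2 * r ≤ n) :
    tdet (extremalMatrix q r n) = q * n + 2 * r := by
  have hbound : ∑ i : Fin n, (q + if (i : ℕ) < r then 1 else 0) +
      ∑ j : Fin n, (if (j : ℕ) < r then 1 else 0) = q * n + 2 * r := by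
    simp only [sum_add_distrib, Fin.sum_boole_val_lt (by omega : r ≤ n), sum_const, card_univ,
      Fintype.card_fin, smul_eq_mul]
    ring
  refine le_antisymm (hbound ▸ tdet_le_of_le_add _ _ fun i j => tsub_le_self) ?_
  -- the reversal pairs the first `r` rows with the last `r` columns and vice versa
  calc q * n + 2 * r = ∑ i, extremalMatrix q r n i (Fin.revPerm i) := by
        rw [← hbound, ← Equiv.sum_comp Fin.revPerm fun j : Fin n => if (j : ℕ) < r then 1 else 0,
          ← sum_add_distrib]
        refine sum_congr rfl fun i _ => ?_
        have : ¬((i : ℕ) < r ∧ n - (i + 1) < r) := by omega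
        simp [extremalMatrix, cornerExcess, this]
    _ ≤ tdet (extremalMatrix q r n) := sum_le_tdet _ Fin.revPerm

end Extremal

theorem L_eq_small_r_general (m n q r : ℕ)
    (hm : m = q * n + r) (hr1 : 0 < r) (hr2 : 2 * r ≤ n)
    (hqr : n ≤ q * r + 2 * r) :
    (∀ A : Fin n → Fin n → ℕ, IsDSM m n A → q * n + 2 * r ≤ tdet A) ∧
    (∃ A : Fin n → Fin n → ℕ, IsDSM m n A ∧ tdet A = q * n + 2 * r) := by
  subst hm
  exact ⟨fun A hA => hA.le_tdet hr2,
    ⟨extremalMatrix q r n, isDSM_extremalMatrix hr1 hr2 hqr, tdet_extremalMatrix hr2⟩⟩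

/-- If m = qn + r with 0 < r ≤ n/2 and qr ≥ n - 2r, then L(m,n) = m + r = qn + 2r. -/
theorem L_eq_small_r (m n q r : ℕ) (hn : 0 < n)
    (hm : m = q * n + r) (hr1 : 0 < r) (hr2 : 2 * r ≤ n)
    (hqr : n ≤ q * r + 2 * r) :
    (∀ A : Fin n → Fin n → ℕ, IsDSM m n A → q * n + 2 * r ≤ tdet A) ∧
    (∃ A : Fin n → Fin n → ℕ, IsDSM m n A ∧ tdet A = q * n + 2 * r) :=
  L_eq_small_r_general m n q r hm hr1 hr2 hqr
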